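/- With the notation of the reflected wave geometry (x, z+h > 0, r = √(x²+(z+h)²), 0 < V < V_max, c = √(1/V² − 1/V_max²)), the functions q₀(t) = √(t²/r² − 1/V²) (for t ≥ r/V) and q₁(t) = √((t − (z+h)c)²/x² − 1/V_max²) satisfy q₀(t) ≤ q₁(t) for all t in [max(r/V, t_{h₁}), t_{h₂}], where t_{h₁} = (z+h)c + x/V_max and t_{h₂} = r²c/(z+h), provided x/r > V/V_max. -/

import Mathlib

/-!
Writing `d = z + h`, so that `r² = x² + d²`, and `c² = 1/V² - 1/V_max²`, the radicands of `q₁`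
and `q₀` differ by the perfect square `(d t - r² c)² / (r² x²)`. Hence `q₀ t ≤ q₁ t` for every
`t`; the radicands agree exactly at `t = t_{h₂}`.
-/

lemma sub_mul_div_sq_add_sq_sub_div_sq {x d r c t : ℝ} (hx : x ≠ 0) (hr : r ^ 2 = x ^ 2 + d ^ 2) :
    (t - d * c) ^ 2 / x ^ 2 + c ^ 2 - t ^ 2 / r ^ 2 = (d * t - r ^ 2 * c) ^ 2 / (r ^ 2 * x ^ 2) := by
  have hr0 : r ≠ 0 := by
    rintro rfl
    nlinarith [sq_pos_of_ne_zero hx, sq_nonneg d]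
  field_simp
  linear_combination (t ^ 2 - c ^ 2 * r ^ 2) * hr

lemma sq_div_le_sub_mul_div_sq_add_sq {x d r c t : ℝ} (hx : x ≠ 0) (hr : r ^ 2 = x ^ 2 + d ^ 2) :
    t ^ 2 / r ^ 2 ≤ (t - d * c) ^ 2 / x ^ 2 + c ^ 2 := by
  have hgap := sub_mul_div_sq_add_sq_sub_div_sq (t := t) (c := c) hx hr
  have : 0 ≤ (d * t - r ^ 2 * c) ^ 2 / (r ^ 2 * x ^ 2) := by positivity
  linarith

lemma one_div_sq_sub_one_div_sq_nonneg {V W : ℝ} (hV : 0 < V) (hVW : V ≤ W) :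
    0 ≤ 1 / V ^ 2 - 1 / W ^ 2 :=
  sub_nonneg.mpr (one_div_le_one_div_of_le (by positivity) (pow_le_pow_left₀ hV.le hVW 2))

theorem stmt_16_general (x z h V Vmax : ℝ) (hx : 0 < x)
    (hV : 0 < V) (hVmax : V < Vmax)
    (r c : ℝ) (hr : r = Real.sqrt (x ^ 2 + (z + h) ^ 2))
    (hc : c = Real.sqrt (1 / V ^ 2 - 1 / Vmax ^ 2))
    (q₀ q₁ : ℝ → ℝ)
    (hq₀ : ∀ t, q₀ t = Real.sqrt (t ^ 2 / r ^ 2 - 1 / V ^ 2))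
    (hq₁ : ∀ t, q₁ t = Real.sqrt ((t - (z + h) * c) ^ 2 / x ^ 2 - 1 / Vmax ^ 2))
    (th₁ th₂ : ℝ) :
    ∀ t ∈ Set.Icc (max (r / V) th₁) th₂, q₀ t ≤ q₁ t := by
  intro t _
  have hr2 : r ^ 2 = x ^ 2 + (z + h) ^ 2 := by rw [hr, Real.sq_sqrt (by positivity)]
  have hc2 : c ^ 2 = 1 / V ^ 2 - 1 / Vmax ^ 2 := by
    rw [hc, Real.sq_sqrt (one_div_sq_sub_one_div_sq_nonneg hV hVmax.le)]
  have hgap := sq_div_le_sub_mul_div_sq_add_sq (t := t) (c := c) hx.ne' hr2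
  rw [hq₀, hq₁]
  exact Real.sqrt_le_sqrt (by linarith)

/-- The lower bound `q₀` does not exceed the upper bound `q₁` on the interval
`[max(r/V, t_{h₁}), t_{h₂}]`, in the head-wave region `x/r > V/V_max`. -/
theorem stmt_16 (x z h V Vmax : ℝ) (hx : 0 < x) (hzh : 0 < z + h)
    (hV : 0 < V) (hVmax : V < Vmax)
    (r c : ℝ) (hr : r = Real.sqrt (x ^ 2 + (z + h) ^ 2))
    (hc : c = Real.sqrt (1 / V ^ 2 - 1 / Vmax ^ 2))
    (q₀ q₁ : ℝ → ℝ)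
    (hq₀ : ∀ t, q₀ t = Real.sqrt (t ^ 2 / r ^ 2 - 1 / V ^ 2))
    (hq₁ : ∀ t, q₁ t = Real.sqrt ((t - (z + h) * c) ^ 2 / x ^ 2 - 1 / Vmax ^ 2))
    (th₁ th₂ : ℝ) (hth₁ : th₁ = (z + h) * c + x / Vmax)
    (hth₂ : th₂ = r ^ 2 * c / (z + h))
    (hreg : x / r > V / Vmax) :
    ∀ t ∈ Set.Icc (max (r / V) th₁) th₂, q₀ t ≤ q₁ t :=
  stmt_16_general x z h V Vmax hx hV hVmax r c hr hc q₀ q₁ hq₀ hq₁ th₁ th₂
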